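/- Let (S(t)) be a C₀-semigroup on H with generator A, and let Q be a bounded self-adjoint nonnegative operator satisfying Hypothesis H and S(t)Q = QS(t)* for all t ≥ 0. Then for every x ∈ H: Q∞x ∈ dom(A) and A(Q∞x) = −(1/2)Qx. In particular, the range of Q is contained in the range of A, and the bounded operator x ↦ A(Q∞x) equals −(1/2)Q, hence is self-adjoint and nonpositive. -/
import Mathlib


/-!
STATEMENT 6.  Let (S(t)) be a C₀-semigroup on a separable real Hilbert space H with
generator A, and Q a bounded self-adjoint nonnegative operator satisfying Hypothesis H
and S(t)Q = QS(t)* for all t ≥ 0.  Then for every x ∈ H: Q∞x ∈ dom(A) and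
A(Q∞x) = −(1/2)Qx.  In particular the range of Q is contained in the range of A, and the
bounded operator x ↦ A(Q∞x) equals −(1/2)Q, hence is self-adjoint and nonpositive.

The generator is encoded by the predicate `genTo S x y`, meaning x ∈ dom(A) and Ax = y.
-/

open MeasureTheory Filter Set ContinuousLinearMap
open scoped RealInnerProductSpace ENNReal
open scoped NNReal

noncomputable section

variable {H : Type*} [NormedAddCommGroup H] [InnerProductSpace ℝ H] [CompleteSpace H]

/-- `x ∈ dom(A)` and `Ax = y` for the generator `A` of the semigroup `S`. -/
def genTo (S : ℝ → H →L[ℝ] H) (x y : H) : Prop :=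
  Filter.Tendsto (fun t : ℝ => t⁻¹ • (S t x - x)) (nhdsWithin 0 (Set.Ioi 0)) (nhds y)

/-- The operator norm squared is bounded by the Hilbert–Schmidt norm squared. -/
lemma opNorm_sq_le_hs {ι : Type*} (b : HilbertBasis ι ℝ H) (T : H →L[ℝ] H) :
    (‖T‖₊ : ℝ≥0∞) ^ 2 ≤ ∑' i, (‖T (b i)‖₊ : ℝ≥0∞) ^ 2 := by
  by_cases hF : (∑' i, (‖T (b i)‖₊ : ℝ≥0∞) ^ 2) = ⊤
  · simp [hF]
  have hF' : (∑' i, ((‖T (b i)‖₊ ^ 2 : ℝ≥0) : ℝ≥0∞)) ≠ ⊤ := by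
    simp_rw [ENNReal.coe_pow]
    exact hF
  have hsum : Summable (fun i => (‖T (b i)‖₊ ^ 2 : ℝ≥0)) :=
    ENNReal.tsum_coe_ne_top_iff_summable.mp hF'
  have hsumR : Summable (fun i => (‖T (b i)‖ ^ 2 : ℝ)) := by
    have := NNReal.summable_coe.mpr hsum
    simpa using this
  set C : ℝ := ∑' i, ‖T (b i)‖ ^ 2 with hC
  have hC0 : 0 ≤ C := tsum_nonneg (fun i => sq_nonneg _)
  have key : ∀ z : H, ‖ContinuousLinearMap.adjoint T z‖ ^ 2 ≤ C * ‖z‖ ^ 2 := by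
    intro z
    have hpars : ‖ContinuousLinearMap.adjoint T z‖ ^ 2
        = ∑' i, ⟪ContinuousLinearMap.adjoint T z, b i⟫ * ⟪b i, ContinuousLinearMap.adjoint T z⟫ := by
      rw [b.tsum_inner_mul_inner, real_inner_self_eq_norm_sq]
    rw [hpars]
    have hle : ∀ i, ⟪ContinuousLinearMap.adjoint T z, b i⟫ * ⟪b i, ContinuousLinearMap.adjoint T z⟫
        ≤ ‖T (b i)‖ ^ 2 * ‖z‖ ^ 2 := by
      intro i
      have e1 : ⟪ContinuousLinearMap.adjoint T z, b i⟫ = ⟪z, T (b i)⟫ :=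
        ContinuousLinearMap.adjoint_inner_left T (b i) z
      have e2 : ⟪b i, ContinuousLinearMap.adjoint T z⟫ = ⟪z, T (b i)⟫ := by
        rw [real_inner_comm]; exact e1
      rw [e1, e2, ← sq]
      have h1 : |⟪z, T (b i)⟫| ≤ ‖z‖ * ‖T (b i)‖ := abs_real_inner_le_norm _ _
      nlinarith [sq_abs ⟪z, T (b i)⟫, abs_nonneg ⟪z, T (b i)⟫, norm_nonneg z,
        norm_nonneg (T (b i))]
    calc _ ≤ ∑' i, ‖T (b i)‖ ^ 2 * ‖z‖ ^ 2 :=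
          Summable.tsum_le_tsum hle (b.summable_inner_mul_inner _ _) (hsumR.mul_right _)
      _ = C * ‖z‖ ^ 2 := by rw [tsum_mul_right]
  have hadj : ‖ContinuousLinearMap.adjoint T‖ ≤ Real.sqrt C := by
    refine ContinuousLinearMap.opNorm_le_bound _ (Real.sqrt_nonneg C) fun z => ?_
    calc ‖ContinuousLinearMap.adjoint T z‖
        = Real.sqrt (‖ContinuousLinearMap.adjoint T z‖ ^ 2) :=
          (Real.sqrt_sq (norm_nonneg _)).symm
      _ ≤ Real.sqrt (C * ‖z‖ ^ 2) := Real.sqrt_le_sqrt (key z)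
      _ = Real.sqrt C * ‖z‖ := by
          rw [Real.sqrt_mul hC0, Real.sqrt_sq (norm_nonneg _)]
  have hTle : ‖T‖ ≤ Real.sqrt C := by
    have : ‖ContinuousLinearMap.adjoint T‖ = ‖T‖ :=
      (ContinuousLinearMap.adjoint : (H →L[ℝ] H) ≃ₗᵢ⋆[ℝ] (H →L[ℝ] H)).norm_map T
    linarith [hadj, this.symm.le]
  have hTnorm : ‖T‖ ^ 2 ≤ C := by
    have := pow_le_pow_left₀ (norm_nonneg T) hTle 2
    rwa [Real.sq_sqrt hC0] at this
  have hcoe : (∑' i, (‖T (b i)‖₊ : ℝ≥0∞) ^ 2)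
      = ((∑' i, ‖T (b i)‖₊ ^ 2 : ℝ≥0) : ℝ≥0∞) := by
    rw [ENNReal.coe_tsum hsum]
    simp_rw [ENNReal.coe_pow]
  rw [hcoe, show ((‖T‖₊ : ℝ≥0∞)) ^ 2 = ((‖T‖₊ ^ 2 : ℝ≥0) : ℝ≥0∞) from
    (by rw [ENNReal.coe_pow] :
    ((‖T‖₊ : ℝ≥0∞)) ^ 2 = ((‖T‖₊ ^ 2 : ℝ≥0) : ℝ≥0∞)), ENNReal.coe_le_coe, ← NNReal.coe_le_coe, NNReal.coe_tsum]
  push_cast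
  exact hTnorm

theorem statement6 {ι : Type*}
    (S : ℝ → H →L[ℝ] H)
    (hS0 : S 0 = 1)
    (hSadd : ∀ s t : ℝ, 0 ≤ s → 0 ≤ t → S (s + t) = (S s).comp (S t))
    (hScont : ∀ x : H, ContinuousOn (fun t => S t x) (Set.Ici 0))
    (Q sqrtQ : H →L[ℝ] H) (hQsa : IsSelfAdjoint Q) (hQnn : ∀ x : H, 0 ≤ ⟪Q x, x⟫)
    (hsqrt_sa : IsSelfAdjoint sqrtQ) (hsqrt_nn : ∀ x : H, 0 ≤ ⟪sqrtQ x, x⟫)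
    (hsqrt_sq : sqrtQ.comp sqrtQ = Q)
    -- (e_i) is an orthonormal basis of H
    (e : ι → H) (he : Orthonormal ℝ e)
    (he_tot : Dense ((Submodule.span ℝ (Set.range e) : Submodule ℝ H) : Set H))
    -- Hypothesis H, part 1: ∫₀^∞ Σ_i |Q^{1/2}S(s)*e_i|² ds < ∞
    (hint : (∫⁻ s in Set.Ioi (0:ℝ),
        ∑' i : ι, (‖sqrtQ (ContinuousLinearMap.adjoint (S s) (e i))‖₊ : ℝ≥0∞) ^ 2) < ⊤)
    -- Hypothesis H, part 2: Q∞ is injective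
    (hQinf_inj : Function.Injective (fun x : H =>
      ∫ s in Set.Ioi (0:ℝ), S s (Q (ContinuousLinearMap.adjoint (S s) x))))
    -- the symmetry condition S(t)Q = QS(t)*
    (hcomm : ∀ t : ℝ, 0 ≤ t → (S t).comp Q = Q.comp (ContinuousLinearMap.adjoint (S t))) :
    (∀ x : H,
        genTo S (∫ s in Set.Ioi (0:ℝ), S s (Q (ContinuousLinearMap.adjoint (S s) x)))
          ((-(1/2) : ℝ) • Q x)) ∧
      (∀ x : H, ∃ y : H, genTo S y (Q x)) := by
  classical
  -- Hilbert basis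
  have hsp : ⊤ ≤ (Submodule.span ℝ (Set.range e)).topologicalClosure := by
    rw [Submodule.dense_iff_topologicalClosure_eq_top.mp he_tot]
  set b : HilbertBasis ι ℝ H := HilbertBasis.mk he hsp with hbdef
  have hb_coe : ∀ i, b i = e i := fun i => by
    rw [hbdef, HilbertBasis.coe_mk]
  -- the Hilbert–Schmidt-type bound
  set F : ℝ → ℝ≥0∞ :=
    fun s => ∑' i : ι, (‖sqrtQ (ContinuousLinearMap.adjoint (S s) (e i))‖₊ : ℝ≥0∞) ^ 2 with hFdef
  set T : ℝ → H →L[ℝ] H := fun s => sqrtQ.comp (ContinuousLinearMap.adjoint (S s)) with hTdef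
  have hT_bound : ∀ s : ℝ, (‖T s‖₊ : ℝ≥0∞) ^ 2 ≤ F s := by
    intro s
    have := opNorm_sq_le_hs b (T s)
    simpa [hb_coe, hTdef, hFdef] using this
  have key : ∀ x : H, genTo S
      (∫ s in Set.Ioi (0:ℝ), S s (Q (ContinuousLinearMap.adjoint (S s) x)))
      ((-(1/2) : ℝ) • Q x) := by
    intro x
    set f : ℝ → H := fun s => S s (Q (ContinuousLinearMap.adjoint (S s) x)) with hfdef
    set g : ℝ → H := fun s => S (2 * s) (Q x) with hgdef
    -- f = T* (T x), hence the norm bound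
    have hTadj : ∀ s, ContinuousLinearMap.adjoint (T s) = (S s).comp sqrtQ := by
      intro s
      rw [hTdef]
      simp [ContinuousLinearMap.adjoint_comp, hsqrt_sa.adjoint_eq]
    have hQapp : ∀ y : H, sqrtQ (sqrtQ y) = Q y := fun y => by
      have := DFunLike.congr_fun hsqrt_sq y
      simpa using this
    have hf_TT : ∀ s, f s = ContinuousLinearMap.adjoint (T s) (T s x) := by
      intro s
      rw [hTadj, hfdef, hTdef]
      simp [hQapp]
    have hf_nn : ∀ s, (‖f s‖₊ : ℝ≥0∞) ≤ ‖x‖₊ * F s := by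
      intro s
      have h1 : ‖f s‖ ≤ ‖T s‖ ^ 2 * ‖x‖ := by
        rw [hf_TT]
        calc ‖ContinuousLinearMap.adjoint (T s) (T s x)‖
            ≤ ‖ContinuousLinearMap.adjoint (T s)‖ * ‖T s x‖ := (T s).adjoint.le_opNorm _
          _ ≤ ‖ContinuousLinearMap.adjoint (T s)‖ * (‖T s‖ * ‖x‖) := by
              have := (T s).le_opNorm x
              exact mul_le_mul_of_nonneg_left this (norm_nonneg _)
          _ = ‖T s‖ ^ 2 * ‖x‖ := by
              rw [(ContinuousLinearMap.adjoint :
                (H →L[ℝ] H) ≃ₗᵢ⋆[ℝ] (H →L[ℝ] H)).norm_map (T s)]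
              ring
      have h2 : (‖f s‖₊ : ℝ≥0∞) ≤ (‖T s‖₊ : ℝ≥0∞) ^ 2 * ‖x‖₊ := by
        rw [show ((‖T s‖₊ : ℝ≥0∞)) ^ 2 * ((‖x‖₊ : ℝ≥0) : ℝ≥0∞)
            = ((‖T s‖₊ ^ 2 * ‖x‖₊ : ℝ≥0) : ℝ≥0∞) by
          rw [ENNReal.coe_mul, ENNReal.coe_pow], ENNReal.coe_le_coe, ← NNReal.coe_le_coe]
        push_cast
        simpa using h1
      calc (‖f s‖₊ : ℝ≥0∞) ≤ (‖T s‖₊ : ℝ≥0∞) ^ 2 * ‖x‖₊ := h2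
        _ ≤ F s * ‖x‖₊ := mul_le_mul_left (hT_bound s) _
        _ = ‖x‖₊ * F s := mul_comm _ _
    -- f = g for s ≥ 0
    have hfg : ∀ s : ℝ, 0 ≤ s → f s = g s := by
      intro s hs
      have h1 : Q (ContinuousLinearMap.adjoint (S s) x) = S s (Q x) := by
        have := DFunLike.congr_fun (hcomm s hs) x
        simpa using this.symm
      rw [hfdef, hgdef]
      simp only
      rw [h1, two_mul, hSadd s s hs hs]
      rfl
    -- continuity of g on Ici 0
    have gcont : ContinuousOn g (Ici 0) := by
      have h2 : Continuous (fun s : ℝ => 2 * s) := continuous_const.mul continuous_id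
      have hmaps : MapsTo (fun s : ℝ => 2 * s) (Ici 0) (Ici 0) := by
        intro s hs
        simp only [mem_Ici] at *
        linarith
      exact (hScont (Q x)).comp h2.continuousOn hmaps
    -- integrability of g on Ioi 0
    have hg_meas : AEStronglyMeasurable g (volume.restrict (Ioi (0:ℝ))) :=
      (gcont.mono Ioi_subset_Ici_self).aestronglyMeasurable measurableSet_Ioi
    have hg_int : IntegrableOn g (Ioi (0:ℝ)) volume := by
      refine ⟨hg_meas, ?_⟩
      rw [hasFiniteIntegral_def]
      calc (∫⁻ s in Ioi (0:ℝ), (‖g s‖₊ : ℝ≥0∞))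
          ≤ ∫⁻ s in Ioi (0:ℝ), ‖x‖₊ * F s := by
            refine setLIntegral_mono' measurableSet_Ioi fun s hs => ?_
            rw [← hfg s (le_of_lt hs)]
            exact hf_nn s
        _ = ‖x‖₊ * ∫⁻ s in Ioi (0:ℝ), F s := lintegral_const_mul' _ _ ENNReal.coe_ne_top
        _ < ⊤ := ENNReal.mul_lt_top ENNReal.coe_lt_top hint
    have hf_int : IntegrableOn f (Ioi (0:ℝ)) volume :=
      hg_int.congr_fun (fun s hs => (hfg s (le_of_lt hs)).symm) measurableSet_Ioi
    -- FTC at 0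
    have hmeasf : StronglyMeasurableAtFilter g (nhdsWithin 0 (Ioi (0:ℝ))) :=
      ⟨Ioi 0, self_mem_nhdsWithin, hg_meas⟩
    have hFTC : HasDerivWithinAt (fun c => ∫ u in (0:ℝ)..c, g u) (g 0) (Ici 0) 0 :=
      intervalIntegral.integral_hasDerivWithinAt_right IntervalIntegrable.refl hmeasf
        ((gcont 0 self_mem_Ici).mono Ioi_subset_Ici_self)
    have hg0 : g 0 = Q x := by
      rw [hgdef]; simp [hS0]
    have hslope : Tendsto (fun c : ℝ => c⁻¹ • ∫ u in (0:ℝ)..c, g u)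
        (nhdsWithin 0 (Ioi (0:ℝ))) (nhds (Q x)) := by
      rw [hasDerivWithinAt_iff_tendsto_slope, Set.Ici_sdiff_left, hg0] at hFTC
      refine hFTC.congr fun c => ?_
      simp [slope_def_module, intervalIntegral.integral_same]
    -- compose with t ↦ t/2
    have h2 : Tendsto (fun t : ℝ => t / 2) (nhdsWithin 0 (Ioi (0:ℝ)))
        (nhdsWithin 0 (Ioi (0:ℝ))) := by
      rw [tendsto_nhdsWithin_iff]
      constructor
      · have : Tendsto (fun t : ℝ => t / 2) (nhds 0) (nhds (0 / 2)) :=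
          tendsto_id.div_const 2
        simpa using this.mono_left nhdsWithin_le_nhds
      · exact Filter.eventually_of_mem self_mem_nhdsWithin fun t ht => by
          simp only [mem_Ioi] at *
          linarith
    have hlim : Tendsto (fun t : ℝ => (-(1/2) : ℝ) • ((t / 2)⁻¹ • ∫ u in (0:ℝ)..(t / 2), g u))
        (nhdsWithin 0 (Ioi (0:ℝ))) (nhds ((-(1/2) : ℝ) • Q x)) :=
      (hslope.comp h2).const_smul _
    -- eventual equality
    rw [genTo]
    refine Filter.Tendsto.congr' ?_ hlim
    filter_upwards [self_mem_nhdsWithin] with t ht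
    simp only [mem_Ioi] at ht
    set c := t / 2 with hc
    have hc0 : 0 < c := by rw [hc]; linarith
    have hstep1 : S t (∫ s in Ioi (0:ℝ), f s) = ∫ s in Ioi (0:ℝ), S t (f s) :=
      (ContinuousLinearMap.integral_comp_comm (S t) hf_int).symm
    have hstep2 : ∀ s ∈ Ioi (0:ℝ), S t (f s) = g (s + c) := by
      intro s hs
      simp only [mem_Ioi] at hs
      rw [hfg s (le_of_lt hs)]
      have h3 : S t (g s) = S (t + 2*s) (Q x) := by
        rw [hgdef]
        simp only
        rw [hSadd t (2*s) (le_of_lt ht) (by linarith)]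
        rfl
      rw [h3, hgdef]
      simp only
      congr 2
      rw [hc]; ring
    have hstep3 : (∫ s in Ioi (0:ℝ), g (s + c)) = ∫ s in Ioi c, g s := by
      have hmp : MeasurePreserving (fun s : ℝ => s + c) volume volume :=
        measurePreserving_add_right volume c
      have hemb : MeasurableEmbedding (fun s : ℝ => s + c) :=
        (MeasurableEquiv.addRight c).measurableEmbedding
      have h4 := hmp.setIntegral_preimage_emb hemb g (Ioi c)
      rw [show (fun s : ℝ => s + c) ⁻¹' (Ioi c) = Ioi 0 by
        rw [preimage_add_const_Ioi]; simp] at h4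
      exact h4
    have hsplit : (∫ s in Ioi (0:ℝ), g s) = (∫ s in Ioc (0:ℝ) c, g s) + ∫ s in Ioi c, g s := by
      rw [← Ioc_union_Ioi_eq_Ioi (le_of_lt hc0)]
      exact setIntegral_union Ioc_disjoint_Ioi_same measurableSet_Ioi
        (hg_int.mono_set Ioc_subset_Ioi_self) (hg_int.mono_set (Ioi_subset_Ioi (le_of_lt hc0)))
    have hfgint : (∫ s in Ioi (0:ℝ), f s) = ∫ s in Ioi (0:ℝ), g s :=
      setIntegral_congr_fun measurableSet_Ioi fun s hs => hfg s (le_of_lt hs)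
    have hIoc : (∫ s in Ioc (0:ℝ) c, g s) = ∫ u in (0:ℝ)..c, g u :=
      (intervalIntegral.integral_of_le (le_of_lt hc0)).symm
    have hdiff : S t (∫ s in Ioi (0:ℝ), f s) - ∫ s in Ioi (0:ℝ), f s
        = -(∫ u in (0:ℝ)..c, g u) := by
      rw [hstep1, setIntegral_congr_fun measurableSet_Ioi hstep2, hstep3, hfgint, hsplit, hIoc]
      abel
    show (-(1/2) : ℝ) • (c⁻¹ • ∫ u in (0:ℝ)..c, g u)
        = t⁻¹ • (S t (∫ s in Ioi (0:ℝ), f s) - ∫ s in Ioi (0:ℝ), f s)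
    rw [hdiff, smul_smul, smul_neg, ← neg_smul]
    congr 1
    rw [hc]
    have ht0 : t ≠ 0 := ne_of_gt ht
    field_simp
  refine ⟨key, fun x => ⟨∫ s in Set.Ioi (0:ℝ),
    S s (Q (ContinuousLinearMap.adjoint (S s) ((-2 : ℝ) • x))), ?_⟩⟩
  have := key ((-2 : ℝ) • x)
  have hval : (-(1/2) : ℝ) • Q ((-2 : ℝ) • x) = Q x := by
    rw [_root_.map_smul, smul_smul]
    norm_num
  rwa [hval] at this
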